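/- arXiv:2211.07929 — 3 statements merged into one kernel-verified Lean document; each statement's English description precedes it below -/
import Mathlib

section
/- Let ω₀ > 0, 0 < θ₀ < 1, k ∈ ℝ^d, ω = √(ω₀²+|k|²). For ξ ∈ ℝ^d and u₁, v₁ ∈ ℂ^d define U₅(ξ) = (u₁, 0, −i(ξ·u₁)/ω₀, v₁, 0, −iθ₀(ξ·v₁)/ω₀) ∈ ℂ^{2(d+2)}. Let e±₁ = (1/√2)(±k/ω, 1, ±iω₀/ω, 0, 0, 0) with e₋₁ the complex conjugate of e₁, and B(e)U := B(e,U)+B(U,e) with B as in the coupled Klein–Gordon system. Then for every U ∈ ℂ^{2(d+2)}, every ξ, and every u₁, v₁: the Hermitian inner product ⟨B(e₁)U, U₅(ξ)⟩ = 0 and ⟨B(e₋₁)U, U₅(ξ)⟩ = 0. -/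
open Complex

/-- The state space `ℂ^{2(d+2)}` of the coupled Klein–Gordon system, written as
`(u₁,u₂,u₃,v₁,v₂,v₃)` with `u₁,v₁ ∈ ℂ^d` and scalar remaining entries. -/
abbrev KGV (d : ℕ) := (Fin d → ℂ) × ℂ × ℂ × (Fin d → ℂ) × ℂ × ℂ

namespace KGV

variable {d : ℕ}

def u₁ (U : KGV d) : Fin d → ℂ := U.1
def u₂ (U : KGV d) : ℂ := U.2.1
def u₃ (U : KGV d) : ℂ := U.2.2.1
def v₁ (U : KGV d) : Fin d → ℂ := U.2.2.2.1
def v₂ (U : KGV d) : ℂ := U.2.2.2.2.1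
def v₃ (U : KGV d) : ℂ := U.2.2.2.2.2

end KGV

/-- The quadratic nonlinearity `B` of the coupled Klein–Gordon system:
`B(U,U') = (0, (u₂v₂'+u₂'v₂+u₂u₂')/2, 0, 0, (u₃v₃'+u₃'v₃+u₃u₃')/2, 0)`. -/
noncomputable def KGB {d : ℕ} (U U' : KGV d) : KGV d :=
  (0, (U.u₂ * U'.v₂ + U'.u₂ * U.v₂ + U.u₂ * U'.u₂) / 2, 0,
   0, (U.u₃ * U'.v₃ + U'.u₃ * U.v₃ + U.u₃ * U'.u₃) / 2, 0)

/-- The linearization `B(e)U := B(e,U) + B(U,e)`. -/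
noncomputable def KGBop {d : ℕ} (e U : KGV d) : KGV d := KGB e U + KGB U e

/-- The Hermitian inner product `⟨X,Y⟩ = Σ Xᵢ Ȳᵢ` on `ℂ^{2(d+2)}`. -/
noncomputable def KGip {d : ℕ} (X Y : KGV d) : ℂ :=
  (∑ i : Fin d, X.u₁ i * (starRingEnd ℂ) (Y.u₁ i)) + X.u₂ * (starRingEnd ℂ) Y.u₂
    + X.u₃ * (starRingEnd ℂ) Y.u₃
    + (∑ i : Fin d, X.v₁ i * (starRingEnd ℂ) (Y.v₁ i))
    + X.v₂ * (starRingEnd ℂ) Y.v₂ + X.v₃ * (starRingEnd ℂ) Y.v₃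

/-- The polarization vector `e₁ = (1/√2)(k/ω, 1, iω₀/ω, 0, 0, 0)`. -/
noncomputable def KGe1 {d : ℕ} (ω₀ ω : ℝ) (k : EuclideanSpace ℝ (Fin d)) : KGV d :=
  ((fun i => (Real.sqrt 2 : ℂ)⁻¹ * ((k i : ℂ) / ω)), (Real.sqrt 2 : ℂ)⁻¹,
    (Real.sqrt 2 : ℂ)⁻¹ * (Complex.I * ω₀ / ω), 0, 0, 0)

/-- The conjugate polarization vector `e₋₁ = (1/√2)(−k/ω, 1, −iω₀/ω, 0, 0, 0)`. -/
noncomputable def KGem1 {d : ℕ} (ω₀ ω : ℝ) (k : EuclideanSpace ℝ (Fin d)) : KGV d :=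
  ((fun i => (Real.sqrt 2 : ℂ)⁻¹ * (-(k i : ℂ) / ω)), (Real.sqrt 2 : ℂ)⁻¹,
    (Real.sqrt 2 : ℂ)⁻¹ * (-(Complex.I * ω₀ / ω)), 0, 0, 0)

/-- The orthogonal projector `Π(0)U = (u₁,0,0,v₁,0,0)` onto the zero-frequency eigenspace. -/
def KGP0 {d : ℕ} (U : KGV d) : KGV d := (U.u₁, 0, 0, U.v₁, 0, 0)

/-- A generic element `U₅(ξ) = (u₁, 0, −i(ξ·u₁)/ω₀, v₁, 0, −iθ₀(ξ·v₁)/ω₀)` of the range of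
the eigenprojector `Π₅(ξ)` onto the kernel of the symbol. -/
noncomputable def KGU5 {d : ℕ} (ω₀ θ₀ : ℝ) (ξ : EuclideanSpace ℝ (Fin d))
    (u₁ v₁ : Fin d → ℂ) : KGV d :=
  (u₁, 0, -Complex.I * (∑ i : Fin d, (ξ i : ℂ) * u₁ i) / ω₀,
   v₁, 0, -Complex.I * θ₀ * (∑ i : Fin d, (ξ i : ℂ) * v₁ i) / ω₀)

/-- The unit eigenvector `Ω₁(ζ) = (1/√2)(ζ/λ₁(ζ), 1, iω₀/λ₁(ζ), 0, 0, 0)` of the fast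
branch `λ₁(ζ) = √(ω₀²+|ζ|²)`. -/
noncomputable def KGOmega1 {d : ℕ} (ω₀ : ℝ) (ζ : EuclideanSpace ℝ (Fin d)) : KGV d :=
  ((fun i => (Real.sqrt 2 : ℂ)⁻¹ * ((ζ i : ℂ) / (Real.sqrt (ω₀ ^ 2 + ‖ζ‖ ^ 2) : ℝ))),
    (Real.sqrt 2 : ℂ)⁻¹,
    (Real.sqrt 2 : ℂ)⁻¹ * (Complex.I * ω₀ / (Real.sqrt (ω₀ ^ 2 + ‖ζ‖ ^ 2) : ℝ)), 0, 0, 0)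

/-- The unit eigenvector `Ω₂(ζ) = (1/√2)(0,0,0, θ₀ζ/λ₂(ζ), 1, iω₀/λ₂(ζ))` of the slow
branch `λ₂(ζ) = √(ω₀²+θ₀²|ζ|²)`. -/
noncomputable def KGOmega2 {d : ℕ} (ω₀ θ₀ : ℝ) (ζ : EuclideanSpace ℝ (Fin d)) : KGV d :=
  (0, 0, 0,
    (fun i => (Real.sqrt 2 : ℂ)⁻¹ *
      ((θ₀ * ζ i : ℝ) / (Real.sqrt (ω₀ ^ 2 + θ₀ ^ 2 * ‖ζ‖ ^ 2) : ℝ) : ℝ)),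
    (Real.sqrt 2 : ℂ)⁻¹,
    (Real.sqrt 2 : ℂ)⁻¹ *
      (Complex.I * ω₀ / (Real.sqrt (ω₀ ^ 2 + θ₀ ^ 2 * ‖ζ‖ ^ 2) : ℝ)))

/-- Transparency of the zero mode on the left: for every `U`, `B(e±₁)U` is orthogonal to
the range of the kernel eigenprojector `Π₅(ξ)`, spanned by the vectors `U₅(ξ)`. -/
theorem KG_Bop_orthogonal_kernel {d : ℕ} (ω₀ θ₀ : ℝ) (hω₀ : 0 < ω₀)
    (hθ₀ : 0 < θ₀) (hθ₀' : θ₀ < 1) (k : EuclideanSpace ℝ (Fin d))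
    (ω : ℝ) (hω : ω = Real.sqrt (ω₀ ^ 2 + ‖k‖ ^ 2))
    (U : KGV d) (ξ : EuclideanSpace ℝ (Fin d)) (u₁ v₁ : Fin d → ℂ) :
    KGip (KGBop (KGe1 ω₀ ω k) U) (KGU5 ω₀ θ₀ ξ u₁ v₁) = 0 ∧
    KGip (KGBop (KGem1 ω₀ ω k) U) (KGU5 ω₀ θ₀ ξ u₁ v₁) = 0 := by
  constructor <;>
  simp [KGip, KGBop, KGB, KGU5, KGe1, KGem1, KGV.u₁, KGV.u₂, KGV.u₃, KGV.v₁, KGV.v₂, KGV.v₃,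
    Prod.fst, Prod.snd]
end

section
/- Let ω₀ > 0, 0 < θ₀ < 1, k ∈ ℝ^d, ω = √(ω₀²+|k|²), λ₁(ζ) = √(ω₀²+|ζ|²), λ₂(ζ) = √(ω₀²+θ₀²|ζ|²). Define Ω₁(ζ) = (1/√2)(ζ/λ₁(ζ), 1, iω₀/λ₁(ζ), 0, 0, 0) and Ω₂(ζ) = (1/√2)(0, 0, 0, θ₀ζ/λ₂(ζ), 1, iω₀/λ₂(ζ)), and let e₁ = (1/√2)(k/ω, 1, iω₀/ω, 0, 0, 0), with B(e₁)U = B(e₁,U)+B(U,e₁) for the coupled Klein–Gordon bilinear form B. Then for every ξ ∈ ℝ^d: ⟨B(e₁)Ω₂(ξ), Ω₁(ξ+k)⟩ = 1/(2√2). -/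
open Complex

/-!
`B(e)U` has nonzero entries only in the `u₂` and `v₂` slots, and `Ω₁` has `v₂ = 0`, so the
coefficient is `(e₁.u₂ · Ω₂.v₂) · conj Ω₁.u₂ = 2^{-1/2} · 2^{-1/2} · 2^{-1/2}`, whatever
`ξ`, `k`, `ω`, `ω₀`, `θ₀` are.
-/

section Components

variable {d : ℕ}

@[simp] lemma KGe1_u₂ (ω₀ ω : ℝ) (k : EuclideanSpace ℝ (Fin d)) :
    (KGe1 ω₀ ω k).u₂ = (Real.sqrt 2 : ℂ)⁻¹ := rfl

@[simp] lemma KGe1_v₂ (ω₀ ω : ℝ) (k : EuclideanSpace ℝ (Fin d)) : (KGe1 ω₀ ω k).v₂ = 0 := rfl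

@[simp] lemma KGOmega1_u₂ (ω₀ : ℝ) (ζ : EuclideanSpace ℝ (Fin d)) :
    (KGOmega1 ω₀ ζ).u₂ = (Real.sqrt 2 : ℂ)⁻¹ := rfl

@[simp] lemma KGOmega1_v₂ (ω₀ : ℝ) (ζ : EuclideanSpace ℝ (Fin d)) : (KGOmega1 ω₀ ζ).v₂ = 0 := rfl

@[simp] lemma KGOmega2_u₂ (ω₀ θ₀ : ℝ) (ζ : EuclideanSpace ℝ (Fin d)) :
    (KGOmega2 ω₀ θ₀ ζ).u₂ = 0 := rfl

@[simp] lemma KGOmega2_v₂ (ω₀ θ₀ : ℝ) (ζ : EuclideanSpace ℝ (Fin d)) :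
    (KGOmega2 ω₀ θ₀ ζ).v₂ = (Real.sqrt 2 : ℂ)⁻¹ := rfl

end Components

lemma KGip_KGBop {d : ℕ} (e U Y : KGV d) :
    KGip (KGBop e U) Y =
      (e.u₂ * U.v₂ + U.u₂ * e.v₂ + e.u₂ * U.u₂) * (starRingEnd ℂ) Y.u₂ +
        (e.u₃ * U.v₃ + U.u₃ * e.v₃ + e.u₃ * U.u₃) * (starRingEnd ℂ) Y.v₂ := by
  simp only [KGip, KGBop, KGB, KGV.u₁, KGV.u₂, KGV.u₃, KGV.v₁, KGV.v₂, KGV.v₃,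
    Prod.fst_add, Prod.snd_add, Pi.add_apply, Pi.zero_apply, add_zero, zero_mul,
    Finset.sum_const_zero]
  ring

lemma inv_sqrt_two_mul_inv_sqrt_two_mul_conj :
    (Real.sqrt 2 : ℂ)⁻¹ * (Real.sqrt 2 : ℂ)⁻¹ * (starRingEnd ℂ) (Real.sqrt 2 : ℂ)⁻¹ =
      1 / (2 * (Real.sqrt 2 : ℂ)) := by
  have hsq : ((Real.sqrt 2 : ℝ) : ℂ) * (Real.sqrt 2 : ℝ) = 2 := by
    norm_cast
    exact Real.mul_self_sqrt zero_le_two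
  rw [map_inv₀, Complex.conj_ofReal, ← mul_inv, hsq, one_div, mul_inv]

theorem KG_interaction_coeff_12_general {d : ℕ} (ω₀ θ₀ : ℝ) (k : EuclideanSpace ℝ (Fin d))
    (ω : ℝ) (ξ : EuclideanSpace ℝ (Fin d)) :
    KGip (KGBop (KGe1 ω₀ ω k) (KGOmega2 ω₀ θ₀ ξ)) (KGOmega1 ω₀ (ξ + k)) =
      1 / (2 * (Real.sqrt 2 : ℂ)) := by
  rw [KGip_KGBop]
  simp only [KGe1_u₂, KGe1_v₂, KGOmega2_u₂, KGOmega2_v₂, KGOmega1_u₂, KGOmega1_v₂, mul_zero,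
    add_zero, map_zero]
  exact inv_sqrt_two_mul_inv_sqrt_two_mul_conj

/-- The first `(1,2)`-interaction coefficient of the coupled Klein–Gordon system:
`⟨B(e₁)Ω₂(ξ), Ω₁(ξ+k)⟩ = 1/(2√2)` for every `ξ`. -/
theorem KG_interaction_coeff_12 {d : ℕ} (ω₀ θ₀ : ℝ) (hω₀ : 0 < ω₀)
    (hθ₀ : 0 < θ₀) (hθ₀' : θ₀ < 1) (k : EuclideanSpace ℝ (Fin d))
    (ω : ℝ) (hω : ω = Real.sqrt (ω₀ ^ 2 + ‖k‖ ^ 2)) (ξ : EuclideanSpace ℝ (Fin d)) :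
    KGip (KGBop (KGe1 ω₀ ω k) (KGOmega2 ω₀ θ₀ ξ)) (KGOmega1 ω₀ (ξ + k)) =
      1 / (2 * (Real.sqrt 2 : ℂ)) :=
  KG_interaction_coeff_12_general ω₀ θ₀ k ω ξ
end

section
/- With the notation of the coupled Klein–Gordon system, define Γ₁₂(ξ) = ⟨B(e₁)Ω₂(ξ), Ω₁(ξ+k)⟩ · ⟨B(e₋₁)Ω₁(ξ+k), Ω₂(ξ)⟩. Then for every ξ ∈ ℝ^d: Γ₁₂(ξ) = ω₀² / (8 ω λ₁(ξ+k)), and in particular Γ₁₂(ξ) is real and strictly positive. -/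
open Complex

/-! Since `B` is symmetric, `B(e)U = 2B(e,U)`, and `B(e,U)` lives only in the `u₂`, `v₂` slots.
The first coefficient pairs the `u₂`-entry of `e₁` with the `v₂`-entry of `Ω₂(ξ)` and equals
`1/(2√2)`; the second pairs the `u₃`-entries `−iω₀/(√2ω)` of `e₋₁` and `iω₀/(√2λ₁)` of
`Ω₁(ξ+k)`, whose product `ω₀²/(2ωλ₁)` is real and positive because `(−i)·i = 1`. -/

open ComplexConjugate

theorem ofReal_sqrt_two_inv_mul_self : ((√2 : ℝ) : ℂ)⁻¹ * ((√2 : ℝ) : ℂ)⁻¹ = 2⁻¹ := by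
  rw [← mul_inv, ← ofReal_mul, Real.mul_self_sqrt zero_le_two, ofReal_ofNat]

section KleinGordon

variable {d : ℕ}

theorem KGB_comm (U U' : KGV d) : KGB U U' = KGB U' U := by
  simp only [KGB]
  ring_nf

theorem KGBop_eq (e U : KGV d) :
    KGBop e U = (0, e.u₂ * U.v₂ + U.u₂ * e.v₂ + e.u₂ * U.u₂, 0,
      0, e.u₃ * U.v₃ + U.u₃ * e.v₃ + e.u₃ * U.u₃, 0) := by
  rw [KGBop, KGB_comm U e, KGB]
  ext <;> simp only [Prod.fst_add, Prod.snd_add, add_zero, add_halves]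

theorem KGip_eq_of_support_u₂_v₂ (a b : ℂ) (Y : KGV d) :
    KGip ((0, a, 0, 0, b, 0) : KGV d) Y = a * conj Y.u₂ + b * conj Y.v₂ := by
  simp [KGip, KGV.u₁, KGV.u₂, KGV.u₃, KGV.v₁, KGV.v₂, KGV.v₃]

theorem KGip_KGBop_KGe1_KGOmega2 (ω₀ θ₀ ω : ℝ) (k ξ ζ : EuclideanSpace ℝ (Fin d)) :
    KGip (KGBop (KGe1 ω₀ ω k) (KGOmega2 ω₀ θ₀ ξ)) (KGOmega1 ω₀ ζ) =
      ((1 / (2 * Real.sqrt 2) : ℝ) : ℂ) := by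
  rw [KGBop_eq, KGip_eq_of_support_u₂_v₂]
  simp only [KGe1, KGOmega1, KGOmega2, KGV.u₂, KGV.u₃, KGV.v₂, KGV.v₃]
  push_cast
  simp only [mul_zero, add_zero, map_inv₀, conj_ofReal, map_zero, one_div, mul_inv_rev]
  rw [ofReal_sqrt_two_inv_mul_self]
  ring

theorem KGip_KGBop_KGem1_KGOmega1 (ω₀ θ₀ ω : ℝ) (k ξ ζ : EuclideanSpace ℝ (Fin d)) :
    KGip (KGBop (KGem1 ω₀ ω k) (KGOmega1 ω₀ ζ)) (KGOmega2 ω₀ θ₀ ξ) =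
      ((ω₀ ^ 2 / (2 * Real.sqrt 2 * ω * Real.sqrt (ω₀ ^ 2 + ‖ζ‖ ^ 2)) : ℝ) : ℂ) := by
  rw [KGBop_eq, KGip_eq_of_support_u₂_v₂]
  simp only [KGem1, KGOmega1, KGOmega2, KGV.u₂, KGV.u₃, KGV.v₂, KGV.v₃]
  push_cast
  simp only [mul_zero, add_zero, zero_add, map_zero, mul_neg, neg_mul, map_inv₀, conj_ofReal]
  set s : ℂ := ((√2 : ℝ) : ℂ)
  set lam : ℂ := ((√(ω₀ ^ 2 + ‖ζ‖ ^ 2) : ℝ) : ℂ)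
  calc _ = -(I * I) * ω₀ ^ 2 * (s⁻¹ * s⁻¹) * s⁻¹ / (ω * lam) := by ring
    _ = _ := by rw [I_mul_I, ofReal_sqrt_two_inv_mul_self]; ring

end KleinGordon

theorem KG_Gamma12_positive_general {d : ℕ} (ω₀ θ₀ : ℝ) (hω₀ : 0 < ω₀)
    (k : EuclideanSpace ℝ (Fin d))
    (ω : ℝ) (hω : ω = Real.sqrt (ω₀ ^ 2 + ‖k‖ ^ 2)) (ξ : EuclideanSpace ℝ (Fin d)) :
    KGip (KGBop (KGe1 ω₀ ω k) (KGOmega2 ω₀ θ₀ ξ)) (KGOmega1 ω₀ (ξ + k)) *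
        KGip (KGBop (KGem1 ω₀ ω k) (KGOmega1 ω₀ (ξ + k))) (KGOmega2 ω₀ θ₀ ξ) =
      ((ω₀ ^ 2 / (8 * ω * Real.sqrt (ω₀ ^ 2 + ‖ξ + k‖ ^ 2)) : ℝ) : ℂ) ∧
    0 < ω₀ ^ 2 / (8 * ω * Real.sqrt (ω₀ ^ 2 + ‖ξ + k‖ ^ 2)) := by
  refine ⟨?_, by subst hω; positivity⟩
  rw [KGip_KGBop_KGe1_KGOmega2, KGip_KGBop_KGem1_KGOmega1, ← ofReal_mul, div_mul_div_comm,
    one_mul]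
  congr 2
  calc _ = 4 * (√2 * √2) * ω * √(ω₀ ^ 2 + ‖ξ + k‖ ^ 2) := by ring
    _ = _ := by rw [Real.mul_self_sqrt zero_le_two]; ring

/-- The trace coefficient `Γ₁₂(ξ)`, the product of the two `(1,2)`-interaction
coefficients, equals `ω₀²/(8ωλ₁(ξ+k))`; in particular it is real and strictly positive. -/
theorem KG_Gamma12_positive {d : ℕ} (ω₀ θ₀ : ℝ) (hω₀ : 0 < ω₀)
    (hθ₀ : 0 < θ₀) (hθ₀' : θ₀ < 1) (k : EuclideanSpace ℝ (Fin d))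
    (ω : ℝ) (hω : ω = Real.sqrt (ω₀ ^ 2 + ‖k‖ ^ 2)) (ξ : EuclideanSpace ℝ (Fin d)) :
    KGip (KGBop (KGe1 ω₀ ω k) (KGOmega2 ω₀ θ₀ ξ)) (KGOmega1 ω₀ (ξ + k)) *
        KGip (KGBop (KGem1 ω₀ ω k) (KGOmega1 ω₀ (ξ + k))) (KGOmega2 ω₀ θ₀ ξ) =
      ((ω₀ ^ 2 / (8 * ω * Real.sqrt (ω₀ ^ 2 + ‖ξ + k‖ ^ 2)) : ℝ) : ℂ) ∧
    0 < ω₀ ^ 2 / (8 * ω * Real.sqrt (ω₀ ^ 2 + ‖ξ + k‖ ^ 2)) :=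
  KG_Gamma12_positive_general ω₀ θ₀ hω₀ k ω hω ξ
end
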